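/- arXiv:2510.20982 — 2 statements merged into one kernel-verified Lean document; each statement's English description precedes it below -/
import Mathlib

section
/- There exists a constant c > 0 such that for every smooth compactly supported vector field u : ℝ³ → ℝ³ with div u = 0 everywhere, the Sobolev–Korn inequality (∫_{ℝ³} ‖u(x)‖⁶ dx)^{1/6} ≤ c · (∫_{ℝ³} ‖D(u)(x)‖_F² dx)^{1/2} holds. -/
open MeasureTheory Matrix
open scoped NNReal ENNReal

local notation "𝔼" => EuclideanSpace ℝ (Fin 3)

noncomputable section KornHelpers

private def eval3 (i j : Fin 3) : (𝔼 →L[ℝ] 𝔼) →L[ℝ] ℝ :=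
  (EuclideanSpace.proj j).comp (ContinuousLinearMap.apply ℝ 𝔼 (EuclideanSpace.single i 1))

private lemma toReal_eLpNorm_eq {X : Type*} [NormedAddCommGroup X] {f : 𝔼 → X}
    (hf : Continuous f) (hs : HasCompactSupport f) (n : ℕ) (hn : n ≠ 0) :
    (eLpNorm f n volume).toReal = (∫ x : 𝔼, ‖f x‖ ^ n) ^ ((1:ℝ)/n) := by
  have hne : (n : ℝ≥0∞) ≠ 0 := by exact_mod_cast hn
  have hint : Integrable (fun x : 𝔼 => ‖f x‖ ^ n) volume := by
    refine (hf.norm.pow n).integrable_of_hasCompactSupport ?_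
    exact hs.comp_left (g := fun y : X => ‖y‖ ^ n) (by simp [hn])
  have key : (∫⁻ x : 𝔼, (‖f x‖₊ : ℝ≥0∞) ^ (n : ℝ)) = ENNReal.ofReal (∫ x : 𝔼, ‖f x‖ ^ n) := by
    rw [MeasureTheory.ofReal_integral_eq_lintegral_ofReal hint
      (Filter.Eventually.of_forall fun x => by positivity)]
    refine lintegral_congr fun x => ?_
    rw [ENNReal.ofReal_pow (norm_nonneg _), ofReal_norm, enorm_eq_nnnorm, ENNReal.rpow_natCast]
  rw [eLpNorm_eq_lintegral_rpow_enorm_toReal hne (by simp)]; simp only [enorm_eq_nnnorm]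
  rw [show ((n : ℝ≥0∞)).toReal = (n:ℝ) from by simp]
  rw [key, ← ENNReal.toReal_rpow, ENNReal.toReal_ofReal (integral_nonneg fun x => by positivity)]

private lemma opnorm_sq_le (L : 𝔼 →L[ℝ] 𝔼) :
    ‖L‖ ^ 2 ≤ ∑ i : Fin 3, ∑ j : Fin 3, (L (EuclideanSpace.single i 1) j) ^ 2 := by
  set S := ∑ i : Fin 3, ∑ j : Fin 3, (L (EuclideanSpace.single i 1) j) ^ 2 with hS
  have hS0 : 0 ≤ S := by positivity
  have hb : ‖L‖ ≤ Real.sqrt S := by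
    refine L.opNorm_le_bound (Real.sqrt_nonneg S) fun v => ?_
    have hv : v = ∑ i : Fin 3, v i • EuclideanSpace.single i (1:ℝ) := by
      ext k
      rw [WithLp.ofLp_sum, Finset.sum_apply]
      simp [EuclideanSpace.single_apply]
    have hLv : ∀ j, L v j = ∑ i : Fin 3, v i * L (EuclideanSpace.single i 1) j := by
      intro j
      conv_lhs => rw [hv]
      rw [map_sum, WithLp.ofLp_sum, Finset.sum_apply]
      simp
    have h1 : ‖L v‖ ^ 2 ≤ S * ‖v‖ ^ 2 := by
      have hnv : ‖v‖ ^ 2 = ∑ i : Fin 3, (v i) ^ 2 := by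
        rw [EuclideanSpace.norm_eq, Real.sq_sqrt (by positivity)]
        simp [sq_abs]
      have hnLv : ‖L v‖ ^ 2 = ∑ j : Fin 3, (L v j) ^ 2 := by
        rw [EuclideanSpace.norm_eq, Real.sq_sqrt (by positivity)]
        simp [sq_abs]
      rw [hnLv, hnv]
      calc ∑ j : Fin 3, (L v j) ^ 2
          ≤ ∑ j : Fin 3, (∑ i : Fin 3, (v i)^2) * (∑ i : Fin 3, (L (EuclideanSpace.single i 1) j)^2) := by
            refine Finset.sum_le_sum fun j _ => ?_
            rw [hLv j]
            exact Finset.sum_mul_sq_le_sq_mul_sq _ _ _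
        _ = S * ∑ i : Fin 3, (v i)^2 := by
            rw [← Finset.mul_sum, hS, Finset.sum_comm]
            ring
    calc ‖L v‖ = Real.sqrt (‖L v‖ ^ 2) := by rw [Real.sqrt_sq (norm_nonneg _)]
      _ ≤ Real.sqrt (S * ‖v‖ ^ 2) := Real.sqrt_le_sqrt h1
      _ = Real.sqrt S * ‖v‖ := by
          rw [Real.sqrt_mul hS0, Real.sqrt_sq (norm_nonneg _)]
  calc ‖L‖ ^ 2 ≤ Real.sqrt S ^ 2 := pow_le_pow_left₀ (norm_nonneg _) hb 2
    _ = S := Real.sq_sqrt hS0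

end KornHelpers

theorem stmt_10 :
    ∃ c : ℝ, 0 < c ∧
      ∀ (u : EuclideanSpace ℝ (Fin 3) → EuclideanSpace ℝ (Fin 3)),
        ContDiff ℝ (⊤ : ℕ∞) u → HasCompactSupport u →
        (∀ x : EuclideanSpace ℝ (Fin 3),
          ∑ i : Fin 3, fderiv ℝ u x (EuclideanSpace.single i 1) i = 0) →
        (∫ x : EuclideanSpace ℝ (Fin 3), ‖u x‖ ^ 6) ^ ((1 : ℝ) / 6)
          ≤ c * (∫ x : EuclideanSpace ℝ (Fin 3),
              ∑ i : Fin 3, ∑ j : Fin 3,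
                ((1 / 2 : ℝ) * (fderiv ℝ u x (EuclideanSpace.single i 1) j
                  + fderiv ℝ u x (EuclideanSpace.single j 1) i)) ^ 2) ^ ((1 : ℝ) / 2) := by
  set C : ℝ≥0 := eLpNormLESNormFDerivOfEqInnerConst (E := 𝔼) volume 2 with hC
  refine ⟨((C : ℝ) + 1) * (2 : ℝ) ^ ((1:ℝ)/2), by positivity, ?_⟩
  intro u hu hcs hdiv
  have hu1 : ContDiff ℝ 1 u := hu.of_le (by simp)
  have hdu : ContDiff ℝ (⊤ : ℕ∞) (fderiv ℝ u) := hu.fderiv_right (by simp)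
  have hcd : HasCompactSupport (fderiv ℝ u) := hcs.fderiv (𝕜 := ℝ)
  set e : Fin 3 → 𝔼 := fun i => EuclideanSpace.single i (1:ℝ) with he
  set d : Fin 3 → Fin 3 → 𝔼 → ℝ := fun i j x => fderiv ℝ u x (e i) j with hd
  have hdeq : ∀ i j, d i j = fun x => eval3 i j (fderiv ℝ u x) := fun i j => rfl
  have hdc : ∀ i j, ContDiff ℝ (⊤ : ℕ∞) (d i j) := fun i j => (eval3 i j).contDiff.comp hdu
  have hdsupp : ∀ i j, HasCompactSupport (d i j) := fun i j =>
    hcd.comp_left (g := eval3 i j) (by simp)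
  have hucomp : ∀ j, ContDiff ℝ (⊤ : ℕ∞) (fun x : 𝔼 => u x j) := fun j =>
    ((EuclideanSpace.proj j : 𝔼 →L[ℝ] ℝ).contDiff).comp hu
  have husupp : ∀ j, HasCompactSupport (fun x : 𝔼 => u x j) := fun j =>
    hcs.comp_left (g := (EuclideanSpace.proj j : 𝔼 →L[ℝ] ℝ)) (by simp)
  have hfderiv_u_comp : ∀ (j : Fin 3) (x v : 𝔼),
      fderiv ℝ (fun y => u y j) x v = fderiv ℝ u x v j := by
    intro j x v
    have : fderiv ℝ (fun y => (EuclideanSpace.proj j : 𝔼 →L[ℝ] ℝ) (u y)) x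
        = (EuclideanSpace.proj j : 𝔼 →L[ℝ] ℝ).comp (fderiv ℝ u x) :=
      ((EuclideanSpace.proj j : 𝔼 →L[ℝ] ℝ).hasFDerivAt.comp x
        (hu.differentiable (by simp) x).hasFDerivAt).fderiv
    exact congrFun (congrArg _ this) v
  have hfderiv_d : ∀ (i j : Fin 3) (x v : 𝔼),
      fderiv ℝ (d i j) x v = fderiv ℝ (fderiv ℝ u) x v (e i) j := by
    intro i j x v
    have : fderiv ℝ (fun y => eval3 i j (fderiv ℝ u y)) x
        = (eval3 i j).comp (fderiv ℝ (fderiv ℝ u) x) :=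
      ((eval3 i j).hasFDerivAt.comp x (hdu.differentiable (by simp) x).hasFDerivAt).fderiv
    rw [hdeq]
    exact congrFun (congrArg _ this) v
  have hsymm : ∀ (x v w : 𝔼),
      fderiv ℝ (fderiv ℝ u) x v w = fderiv ℝ (fderiv ℝ u) x w v := fun x v w =>
    (hu.contDiffAt.isSymmSndFDerivAt (by rw [minSmoothness_of_isRCLikeNormedField]; exact WithTop.coe_le_coe.mpr le_top)) v w
  -- key cancellation using div u = 0
  have hcancel : ∀ (j : Fin 3) (x : 𝔼), (∑ i : Fin 3, fderiv ℝ (d j i) x (e i)) = 0 := by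
    intro j x
    have hdiff : ∀ i ∈ Finset.univ (α := Fin 3), DifferentiableAt ℝ (d i i) x := fun i _ =>
      ((hdc i i).differentiable (by simp) x)
    have h3 : (∑ i : Fin 3, fderiv ℝ (d i i) x) (e j) = 0 := by
      rw [← fderiv_fun_sum hdiff]
      have hz : (fun y => ∑ i : Fin 3, d i i y) = fun _ => (0:ℝ) := funext hdiv
      rw [hz, fderiv_const_apply]
      simp
    calc (∑ i : Fin 3, fderiv ℝ (d j i) x (e i))
        = ∑ i : Fin 3, fderiv ℝ (d i i) x (e j) := by
          refine Finset.sum_congr rfl fun i _ => ?_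
          rw [hfderiv_d, hsymm, ← hfderiv_d]
      _ = 0 := by rw [← h3, ContinuousLinearMap.sum_apply]
  -- integrability helpers
  have hint : ∀ (f : 𝔼 → ℝ), Continuous f →
      HasCompactSupport f → Integrable f volume := fun f hf hsp =>
    hf.integrable_of_hasCompactSupport hsp
  have hdcont : ∀ i j, Continuous (d i j) := fun i j => (hdc i j).continuous
  have hmul_int : ∀ (f g : 𝔼 → ℝ), Continuous f → Continuous g →
      HasCompactSupport f → Integrable (fun x => f x * g x) volume := by
    intro f g hf hg hsp
    exact hint _ (hf.mul hg) hsp.mul_right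
  have cont_fd : ∀ i j : Fin 3, Continuous fun x => fderiv ℝ (d j i) x (e i) := by
    intro i j
    have : Continuous (fderiv ℝ (d j i)) := (((hdc j i).fderiv_right (m := (⊤ : ℕ∞)) (by simp)).continuous)
    exact (ContinuousLinearMap.apply ℝ ℝ (e i)).continuous.comp this
  have supp_fd : ∀ i j : Fin 3, HasCompactSupport fun x => fderiv ℝ (d j i) x (e i) :=
    fun i j => ((hdsupp j i).fderiv (𝕜 := ℝ)).comp_left (g := fun L : 𝔼 →L[ℝ] ℝ => L (e i)) (by simp)
  -- integration by parts
  have hibp : ∀ i j : Fin 3, ∫ x, d i j x * d j i x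
      = - ∫ x, fderiv ℝ (d j i) x (e i) * u x j := by
    intro i j
    have hfd : ∀ x, fderiv ℝ (fun y => u y j) x (e i) = d i j x := fun x =>
      hfderiv_u_comp j x (e i)
    have h := integral_mul_fderiv_eq_neg_fderiv_mul_of_integrable
      (μ := volume) (f := d j i) (g := fun y => u y j) (v := e i)
      (hmul_int _ _ (cont_fd i j) ((hucomp j).continuous) (supp_fd i j))
      (by
        have hcont : Continuous fun x => fderiv ℝ (fun y => u y j) x (e i) := by
          simpa only [funext hfd] using hdcont i j
        exact ((hdcont j i).mul hcont).integrable_of_hasCompactSupport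
          ((hdsupp j i).mul_right))
      (hmul_int _ _ (hdcont j i) ((hucomp j).continuous) (hdsupp j i))
      (fun x _ => (hdc j i).differentiable (by simp) x) (fun x _ => (hucomp j).differentiable (by simp) x)
    calc ∫ x, d i j x * d j i x = ∫ x, d j i x * fderiv ℝ (fun y => u y j) x (e i) := by
          refine integral_congr_ae (Filter.Eventually.of_forall fun x => ?_)
          show d i j x * d j i x = d j i x * fderiv ℝ (fun y => u y j) x (e i)
          rw [hfd x]; ring
      _ = - ∫ x, fderiv ℝ (d j i) x (e i) * u x j := by simpa using h
  -- cross term vanishes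
  have hterm_int : ∀ i j : Fin 3, Integrable (fun x => d i j x * d j i x) volume :=
    fun i j => hmul_int _ _ (hdcont i j) (hdcont j i) (hdsupp i j)
  have hcross : ∫ x, (∑ i : Fin 3, ∑ j : Fin 3, d i j x * d j i x) = 0 := by
    have hsplit : ∫ x, (∑ i : Fin 3, ∑ j : Fin 3, d i j x * d j i x)
        = ∑ i : Fin 3, ∑ j : Fin 3, ∫ x, d i j x * d j i x := by
      rw [integral_finset_sum _ (fun i _ => integrable_finset_sum _ (fun j _ => hterm_int i j))]
      exact Finset.sum_congr rfl fun i _ => integral_finset_sum _ (fun j _ => hterm_int i j)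
    rw [hsplit, Finset.sum_comm]
    refine Finset.sum_eq_zero fun j _ => ?_
    calc (∑ i : Fin 3, ∫ x, d i j x * d j i x)
        = ∑ i : Fin 3, - ∫ x, fderiv ℝ (d j i) x (e i) * u x j :=
          Finset.sum_congr rfl fun i _ => hibp i j
      _ = - ∫ x, ∑ i : Fin 3, fderiv ℝ (d j i) x (e i) * u x j := by
          rw [Finset.sum_neg_distrib, ← integral_finset_sum _ (fun i _ =>
            hmul_int _ _ (cont_fd i j) ((hucomp j).continuous) (supp_fd i j))]
      _ = 0 := by
          rw [← neg_zero]
          congr 1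
          refine integral_eq_zero_of_ae (Filter.Eventually.of_forall fun x => ?_)
          show (∑ i : Fin 3, fderiv ℝ (d j i) x (e i) * u x j) = 0
          rw [← Finset.sum_mul, hcancel j x, zero_mul]
  -- Korn identity
  have hSint : Integrable (fun x => ∑ i : Fin 3, ∑ j : Fin 3, (d i j x)^2) volume :=
    integrable_finset_sum _ (fun i _ => integrable_finset_sum _ (fun j _ =>
      hint _ ((hdcont i j).pow 2) ((hdsupp i j).comp_left (g := fun t : ℝ => t^2) (by simp))))
  have hTint : Integrable (fun x => ∑ i : Fin 3, ∑ j : Fin 3, d i j x * d j i x) volume :=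
    integrable_finset_sum _ (fun i _ => integrable_finset_sum _ (fun j _ => hterm_int i j))
  have hDDpt : ∀ x : 𝔼, (∑ i : Fin 3, ∑ j : Fin 3, ((1/2:ℝ) * (d i j x + d j i x))^2)
      = (1/2) * (∑ i : Fin 3, ∑ j : Fin 3, (d i j x)^2)
        + (1/2) * (∑ i : Fin 3, ∑ j : Fin 3, d i j x * d j i x) := by
    intro x
    simp only [Fin.sum_univ_three]
    ring
  have hDDint : Integrable
      (fun x => ∑ i : Fin 3, ∑ j : Fin 3, ((1/2:ℝ) * (d i j x + d j i x))^2) volume := by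
    rw [funext hDDpt]
    exact (hSint.const_mul _).add (hTint.const_mul _)
  have hKorn : ∫ x, (∑ i : Fin 3, ∑ j : Fin 3, (d i j x)^2)
      = 2 * ∫ x, (∑ i : Fin 3, ∑ j : Fin 3, ((1/2:ℝ) * (d i j x + d j i x))^2) := by
    have : ∫ x, (∑ i : Fin 3, ∑ j : Fin 3, ((1/2:ℝ) * (d i j x + d j i x))^2)
        = (1/2) * (∫ x, (∑ i : Fin 3, ∑ j : Fin 3, (d i j x)^2))
          + (1/2) * (∫ x, (∑ i : Fin 3, ∑ j : Fin 3, d i j x * d j i x)) := by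
      rw [funext hDDpt, integral_add (hSint.const_mul _) (hTint.const_mul _),
        integral_const_mul, integral_const_mul]
    rw [this, hcross]
    ring
  -- bound the operator norm integral
  have hQint : Integrable (fun x => ‖fderiv ℝ u x‖^2) volume :=
    hint _ (hdu.continuous.norm.pow 2)
      (hcd.comp_left (g := fun L : 𝔼 →L[ℝ] 𝔼 => ‖L‖^2) (by simp))
  have hQle : ∫ x, ‖fderiv ℝ u x‖^2 ≤ ∫ x, (∑ i : Fin 3, ∑ j : Fin 3, (d i j x)^2) :=
    integral_mono hQint hSint fun x => opnorm_sq_le (fderiv ℝ u x)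
  -- Sobolev inequality
  have sob : eLpNorm u ((6:ℝ≥0) : ℝ≥0∞) volume
      ≤ (C : ℝ≥0∞) * eLpNorm (fderiv ℝ u) ((2:ℝ≥0) : ℝ≥0∞) volume := by
    have := eLpNorm_le_eLpNorm_fderiv_of_eq_inner (μ := volume) hu1 hcs
      (p := 2) (p' := 6) (by norm_num) (by simp) (by simp; norm_num)
    exact this
  have G2ne : eLpNorm (fderiv ℝ u) ((2:ℝ≥0) : ℝ≥0∞) volume ≠ ⊤ :=
    (hdu.continuous.memLp_of_hasCompactSupport hcd).eLpNorm_lt_top.ne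
  have hL6 : (eLpNorm u ((6:ℝ≥0) : ℝ≥0∞) volume).toReal = (∫ x, ‖u x‖^6)^((1:ℝ)/6) := by
    rw [show ((6:ℝ≥0) : ℝ≥0∞) = ((6:ℕ) : ℝ≥0∞) by norm_num]
    exact toReal_eLpNorm_eq hu.continuous hcs 6 (by norm_num)
  have hG2 : (eLpNorm (fderiv ℝ u) ((2:ℝ≥0) : ℝ≥0∞) volume).toReal
      = (∫ x, ‖fderiv ℝ u x‖^2)^((1:ℝ)/2) := by
    rw [show ((2:ℝ≥0) : ℝ≥0∞) = ((2:ℕ) : ℝ≥0∞) by norm_num]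
    exact toReal_eLpNorm_eq hdu.continuous hcd 2 (by norm_num)
  -- numeric assembly
  set Q : ℝ := ∫ x, ‖fderiv ℝ u x‖^2 with hQ
  set DD : ℝ := ∫ x, (∑ i : Fin 3, ∑ j : Fin 3, ((1/2:ℝ) * (d i j x + d j i x))^2) with hDD
  have hQ0 : 0 ≤ Q := integral_nonneg fun x => by positivity
  have hDD0 : 0 ≤ DD := integral_nonneg fun x => by positivity
  have hQ2 : Q ≤ 2 * DD := le_trans hQle (le_of_eq hKorn)
  have step1 : (∫ x, ‖u x‖^6)^((1:ℝ)/6) ≤ (C:ℝ) * Q^((1:ℝ)/2) := by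
    rw [← hL6, ← hG2]
    have := ENNReal.toReal_mono (ENNReal.mul_ne_top ENNReal.coe_ne_top G2ne) sob
    rwa [ENNReal.toReal_mul, ENNReal.coe_toReal] at this
  have step2 : Q^((1:ℝ)/2) ≤ (2:ℝ)^((1:ℝ)/2) * DD^((1:ℝ)/2) := by
    rw [← Real.mul_rpow (by norm_num) hDD0]
    exact Real.rpow_le_rpow hQ0 hQ2 (by norm_num)
  calc (∫ x, ‖u x‖^6)^((1:ℝ)/6)
      ≤ (C:ℝ) * Q^((1:ℝ)/2) := step1
    _ ≤ (C:ℝ) * ((2:ℝ)^((1:ℝ)/2) * DD^((1:ℝ)/2)) :=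
        mul_le_mul_of_nonneg_left step2 (by positivity)
    _ ≤ ((C:ℝ) + 1) * (2:ℝ)^((1:ℝ)/2) * DD^((1:ℝ)/2) := by
        rw [mul_assoc]
        refine mul_le_mul_of_nonneg_right ?_ (by positivity)
        linarith [C.coe_nonneg]
    _ = ((C:ℝ) + 1) * (2:ℝ)^((1:ℝ)/2) * DD^((1:ℝ)/2) := rfl
end

section
/- If x : ℝ → ℝ is differentiable, T-periodic (x(t + T) = x(t) for all t), and satisfies x′(t) + κ·x(t) ≤ c for all t ∈ ℝ, then x(t) ≤ c/κ for all t ∈ ℝ. -/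
/-!
Multiplying by the integrating factor `exp (κ t)` turns `x' + κ x ≤ c` into the statement that
`g t = exp (κ t) * (x t - c / κ)` is antitone. Periodicity of `x` gives `g (t + T) = exp (κ T) * g t`,
and `g (t + T) ≤ g t` with `exp (κ T) > 1` forces `g t ≤ 0`, that is `x t ≤ c / κ`.
-/

open Real

theorem hasDerivAt_exp_mul_mul_sub_div {κ c t : ℝ} {x : ℝ → ℝ} {x't : ℝ} (hκ : κ ≠ 0)
    (hx : HasDerivAt x x't t) :
    HasDerivAt (fun s => exp (κ * s) * (x s - c / κ)) (exp (κ * t) * (x't + κ * x t - c)) t := by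
  have hexp : HasDerivAt (fun s => exp (κ * s)) (exp (κ * t) * κ) t := by
    simpa using ((hasDerivAt_id t).const_mul κ).exp
  refine (hexp.mul (hx.sub_const (c / κ))).congr_deriv ?_
  field_simp
  ring

theorem antitone_exp_mul_mul_sub_div {κ c : ℝ} {x x' : ℝ → ℝ} (hκ : κ ≠ 0)
    (hderiv : ∀ t, HasDerivAt x (x' t) t) (hineq : ∀ t, x' t + κ * x t ≤ c) :
    Antitone fun t => exp (κ * t) * (x t - c / κ) := by
  have hg t := hasDerivAt_exp_mul_mul_sub_div (c := c) hκ (hderiv t)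
  refine antitone_of_deriv_nonpos (fun t => (hg t).differentiableAt) fun t => ?_
  rw [(hg t).deriv]
  exact mul_nonpos_of_nonneg_of_nonpos (exp_pos _).le (by linarith [hineq t])

theorem stmt_11_general
    (T κ c : ℝ) (hT : 0 < T) (hκ : 0 < κ)
    (x x' : ℝ → ℝ)
    (hderiv : ∀ t : ℝ, HasDerivAt x (x' t) t)
    (hper : ∀ t : ℝ, x (t + T) = x t)
    (hineq : ∀ t : ℝ, x' t + κ * x t ≤ c) :
    ∀ t : ℝ, x t ≤ c / κ := by
  intro t
  set g := fun s => exp (κ * s) * (x s - c / κ) with hg_def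
  have hg_shift : g (t + T) = exp (κ * T) * g t := by
    simp only [hg_def, hper, mul_add, exp_add]
    ring
  have hg_step : g (t + T) ≤ g t :=
    antitone_exp_mul_mul_sub_div hκ.ne' hderiv hineq (le_add_of_nonneg_right hT.le)
  have hgrowth : 1 < exp (κ * T) := one_lt_exp_iff.mpr (mul_pos hκ hT)
  have hg_nonpos : g t ≤ 0 := by nlinarith
  linarith [nonpos_of_mul_nonpos_right hg_nonpos (exp_pos (κ * t))]

theorem stmt_11
    (T κ c : ℝ) (hT : 0 < T) (hκ : 0 < κ) (hc : 0 ≤ c)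
    (x x' : ℝ → ℝ)
    (hderiv : ∀ t : ℝ, HasDerivAt x (x' t) t)
    (hper : ∀ t : ℝ, x (t + T) = x t)
    (hineq : ∀ t : ℝ, x' t + κ * x t ≤ c) :
    ∀ t : ℝ, x t ≤ c / κ :=
  stmt_11_general T κ c hT hκ x x' hderiv hper hineq
end
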